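/- arXiv:2203.01897 — 3 statements merged into one kernel-verified Lean document; each statement's English description precedes it below -/
import Mathlib

section
/- Let φ be any norm on ℝ^d and let α ∈ (0,1). Define, for each positive definite d×d real matrix Σ, the quantile c_α(Σ) := inf{ c > 0 : μ_Σ{t ∈ ℝ^d : φ(t) < c} ≥ 1 − α }. Then the map Σ ↦ c_α(Σ) is continuous on the set of positive definite d×d real matrices. -/
open MeasureTheory Matrix Filter
open scoped ENNReal

/-- Centered Gaussian density on `ℝ^d` with covariance matrix `S`:
`f_S(x) = ((2π)^d det S)^(−1/2) · exp(−(1/2) xᵀ S⁻¹ x)`. -/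
noncomputable def gaussDensity {d : ℕ} (S : Matrix (Fin d) (Fin d) ℝ) (x : Fin d → ℝ) : ℝ :=
  (Real.sqrt ((2 * Real.pi) ^ d * S.det))⁻¹ *
    Real.exp (-(1 / 2) * (x ⬝ᵥ (S⁻¹ *ᵥ x)))

/-- Centered Gaussian measure on `ℝ^d`: the measure with density `gaussDensity S`
with respect to Lebesgue measure. -/
noncomputable def gaussMeasure {d : ℕ} (S : Matrix (Fin d) (Fin d) ℝ) :
    Measure (Fin d → ℝ) :=
  volume.withDensity fun x => ENNReal.ofReal (gaussDensity S x)

/-- `φ` is a norm on `ℝ^d`: point-separating, absolutely homogeneous, subadditive. -/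
structure IsNorm {d : ℕ} (φ : (Fin d → ℝ) → ℝ) : Prop where
  eq_zero : ∀ x, φ x = 0 → x = 0
  smul : ∀ (a : ℝ) (x : Fin d → ℝ), φ (a • x) = |a| * φ x
  triangle : ∀ x y : Fin d → ℝ, φ (x + y) ≤ φ x + φ y

/-- The quantile `c_α(Σ) = inf{ c > 0 : μ_Σ{t : φ(t) < c} ≥ 1 − α }`. -/
noncomputable def gaussQuantile {d : ℕ} (φ : (Fin d → ℝ) → ℝ) (α : ℝ)
    (S : Matrix (Fin d) (Fin d) ℝ) : ℝ :=
  sInf {c : ℝ | 0 < c ∧ ENNReal.ofReal (1 - α) ≤ gaussMeasure S {t : Fin d → ℝ | φ t < c}}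

/-! For every level `c`, `S ↦ μ_S {φ < c}` is continuous on positive definite matrices: the
densities depend continuously on `S` and all have mass one, so Fatou's lemma applied to a set and
to its complement gives convergence (Scheffé). Because `μ_S` charges every nonempty open set,
`c ↦ μ_S {φ < c}` increases strictly once it has reached `1 - α`, i.e. it crosses the level
transversally at the quantile; hence the quantile of any nearby `S` is pinned near that of `S`. -/

open scoped Topology
open Set

namespace IsNorm

variable {d : ℕ} {φ : (Fin d → ℝ) → ℝ}

lemma convexOn (hφ : IsNorm φ) : ConvexOn ℝ univ φ :=
  ⟨convex_univ, fun x _ y _ a b ha hb _ => by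
    simpa only [hφ.smul, abs_of_nonneg ha, abs_of_nonneg hb, smul_eq_mul] using
      hφ.triangle (a • x) (b • y)⟩

lemma continuous (hφ : IsNorm φ) : Continuous φ :=
  continuousOn_univ.mp (by simpa using hφ.convexOn.continuousOn_interior)

lemma measurableSet_setOf_lt (hφ : IsNorm φ) (c : ℝ) : MeasurableSet {x | φ x < c} :=
  measurableSet_lt hφ.continuous.measurable measurable_const

lemma exists_apply_eq (hφ : IsNorm φ) {x : Fin d → ℝ} (hx : 0 < φ x) {r : ℝ} (hr : 0 ≤ r) :
    ∃ y, φ y = r :=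
  ⟨(r / φ x) • x, by rw [hφ.smul, abs_of_nonneg (div_nonneg hr hx.le), div_mul_cancel₀ _ hx.ne']⟩

end IsNorm

section Threshold

variable {β : Type*} [LinearOrder β] {F : ℝ → β} {a : β} {b c : ℝ}

/-- `gaussQuantile φ α S` is by definition
`threshold (fun c => gaussMeasure S {t | φ t < c}) (ENNReal.ofReal (1 - α))`. -/
noncomputable def threshold (F : ℝ → β) (a : β) : ℝ :=
  sInf {c | 0 < c ∧ a ≤ F c}

lemma threshold_nonneg : 0 ≤ threshold F a :=
  Real.sInf_nonneg fun _ hc => hc.1.le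

lemma threshold_le (hc : 0 < c) (h : a ≤ F c) : threshold F a ≤ c :=
  csInf_le ⟨0, fun _ hc => hc.1.le⟩ ⟨hc, h⟩

lemma apply_lt_of_lt_threshold (hc : 0 < c) (h : c < threshold F a) : F c < a :=
  lt_of_not_ge fun hac => (threshold_le hc hac).not_gt h

lemma le_threshold (hF : Monotone F) (hc : 0 < c) (hac : a ≤ F c) (hb : F b < a) :
    b ≤ threshold F a :=
  le_csInf ⟨c, hc, hac⟩ fun _ h => le_of_not_gt fun hlt => (h.2.trans (hF hlt.le)).not_gt hb

lemma exists_lt_of_threshold_lt (hc : 0 < c) (hac : a ≤ F c) (h : threshold F a < b) :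
    ∃ c', 0 < c' ∧ a ≤ F c' ∧ c' < b := by
  obtain ⟨c', hc', hlt⟩ :=
    (csInf_lt_iff (s := {c | 0 < c ∧ a ≤ F c}) ⟨0, fun _ hc => hc.1.le⟩ ⟨c, hc, hac⟩).1 h
  exact ⟨c', hc'.1, hc'.2, hlt⟩

theorem tendsto_threshold [TopologicalSpace β] [OrderTopology β] {ι : Type*} {l : Filter ι}
    {F : ι → ℝ → β} {G : ℝ → β} (hF : ∀ c, Tendsto (fun i => F i c) l (𝓝 (G c)))
    (hmono : ∀ i, Monotone (F i)) (hG : ∀ c, threshold G a < c → a < G c) :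
    Tendsto (fun i => threshold (F i) a) l (𝓝 (threshold G a)) := by
  have reaches : ∀ c, threshold G a < c → ∀ᶠ i in l, a ≤ F i c := fun c hc =>
    ((hF c).eventually_const_lt (hG c hc)).mono fun _ => le_of_lt
  refine tendsto_order.2 ⟨fun b hb => ?_, fun b hb => ?_⟩
  · rcases lt_or_ge b 0 with hb0 | hb0
    · exact Eventually.of_forall fun _ => hb0.trans_le threshold_nonneg
    obtain ⟨c, hbc, hcG⟩ := exists_between hb
    have hc : 0 < c := hb0.trans_lt hbc
    have hc₁ : threshold G a < threshold G a + 1 := lt_add_one _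
    filter_upwards [(hF c).eventually_lt_const (apply_lt_of_lt_threshold hc hcG),
      reaches _ hc₁] with i hi hi₁
    exact hbc.trans_le (le_threshold (hmono i) (threshold_nonneg.trans_lt hc₁) hi₁ hi)
  · obtain ⟨c, hGc, hcb⟩ := exists_between hb
    filter_upwards [reaches c hGc] with i hi
    exact (threshold_le (threshold_nonneg.trans_lt hGc) hi).trans_lt hcb

end Threshold

section SetOfLt

variable {α : Type*} [MeasurableSpace α] (μ : Measure α)

lemma tendsto_measure_setOf_lt_atTop (f : α → ℝ) :
    Tendsto (fun c => μ {x | f x < c}) atTop (𝓝 (μ univ)) := by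
  have h := tendsto_measure_iUnion_atTop (μ := μ) (s := fun c : ℝ => {x | f x < c})
    fun _ _ hbc _ hx => lt_of_lt_of_le hx hbc
  rwa [iUnion_eq_univ_iff.2 fun x => ⟨f x + 1, lt_add_one (f x)⟩] at h

lemma exists_pos_le_measure_setOf_lt {a : ℝ≥0∞} (ha : a < μ univ) (f : α → ℝ) :
    ∃ c, 0 < c ∧ a ≤ μ {x | f x < c} :=
  (((tendsto_measure_setOf_lt_atTop μ f).eventually_const_lt ha).and
    (eventually_gt_atTop 0)).exists.imp fun _ h => ⟨h.2, h.1.le⟩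

end SetOfLt

/-- Either the ball `{φ < c}` is everything, or it contains a nonempty open shell `{b < φ < c}` on
top of a ball `{φ < b}` that already reaches the level. -/
lemma IsNorm.lt_measure_setOf_lt {d : ℕ} {φ : (Fin d → ℝ) → ℝ} (hφ : IsNorm φ)
    (μ : Measure (Fin d → ℝ)) [IsFiniteMeasure μ] [μ.IsOpenPosMeasure] {a : ℝ≥0∞}
    (ha : a < μ univ) {c : ℝ} (hc : threshold (fun r => μ {x | φ x < r}) a < c) :
    a < μ {x | φ x < c} := by
  obtain ⟨c₀, hc₀, hac₀⟩ := exists_pos_le_measure_setOf_lt μ ha φ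
  obtain ⟨b, hb, hab, hbc⟩ := exists_lt_of_threshold_lt hc₀ hac₀ hc
  by_cases hball : ∀ x, φ x < c
  · simpa [hball] using ha
  simp only [not_forall, not_lt] at hball
  obtain ⟨x, hx⟩ := hball
  set shell := {y | b < φ y ∧ φ y < c}
  have hshell_open : IsOpen shell :=
    (isOpen_lt continuous_const hφ.continuous).inter (isOpen_lt hφ.continuous continuous_const)
  have hshell : 0 < μ shell := by
    obtain ⟨y, hy⟩ := hφ.exists_apply_eq ((hb.trans hbc).trans_le hx)
      (r := (b + c) / 2) (by linarith)
    exact hshell_open.measure_pos μ ⟨y, show b < φ y ∧ φ y < c by rw [hy]; constructor <;> linarith⟩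
  have hdisj : Disjoint {x | φ x < b} shell := disjoint_left.2 fun _ h h' => lt_asymm h h'.1
  calc a ≤ μ {x | φ x < b} := hab
    _ < μ {x | φ x < b} + μ shell := ENNReal.lt_add_right (measure_ne_top _ _) hshell.ne'
    _ = μ ({x | φ x < b} ∪ shell) := (measure_union hdisj hshell_open.measurableSet).symm
    _ ≤ μ {x | φ x < c} := measure_mono (union_subset (fun _ h => h.trans hbc) fun _ h => h.2)

section Gaussian

variable {d : ℕ} {S : Matrix (Fin d) (Fin d) ℝ}

lemma gaussDensity_pos (hS : S.PosDef) (x : Fin d → ℝ) : 0 < gaussDensity S x :=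
  mul_pos (inv_pos.2 (Real.sqrt_pos.2 (mul_pos (by positivity) hS.det_pos))) (Real.exp_pos _)

lemma continuous_gaussDensity (S : Matrix (Fin d) (Fin d) ℝ) : Continuous (gaussDensity S) := by
  unfold gaussDensity
  fun_prop

lemma continuousAt_gaussDensity_apply (hS : S.PosDef) (x : Fin d → ℝ) :
    ContinuousAt (fun S => gaussDensity S x) S := by
  have hinv : ContinuousAt (fun S : Matrix (Fin d) (Fin d) ℝ => S⁻¹) S :=
    continuousAt_matrix_inv S (by
      simpa only [Ring.inverse_eq_inv'] using continuousAt_inv₀ hS.det_pos.ne')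
  have hnorm : Real.sqrt ((2 * Real.pi) ^ d * S.det) ≠ 0 :=
    (Real.sqrt_pos.2 (mul_pos (by positivity) hS.det_pos)).ne'
  unfold gaussDensity
  fun_prop (disch := assumption)

lemma lintegral_exp_neg_half_dotProduct_self :
    ∫⁻ y : Fin d → ℝ, ENNReal.ofReal (Real.exp (-(1 / 2) * (y ⬝ᵥ y))) =
      ENNReal.ofReal (Real.sqrt (2 * Real.pi) ^ d) := by
  have hprod : ∀ y : Fin d → ℝ,
      Real.exp (-(1 / 2) * (y ⬝ᵥ y)) = ∏ i, Real.exp (-(1 / 2) * y i ^ 2) := fun y => by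
    rw [← Real.exp_sum, dotProduct, Finset.mul_sum]
    simp only [sq]
  have hint : Integrable fun y : Fin d → ℝ => ∏ i, Real.exp (-(1 / 2) * y i ^ 2) :=
    Integrable.fintype_prod fun _ => integrable_exp_neg_mul_sq (by norm_num)
  simp_rw [hprod]
  rw [← ofReal_integral_eq_lintegral_ofReal hint (ae_of_all _ fun y => by positivity), volume_pi,
    integral_fintype_prod_eq_pow (fun t : ℝ => Real.exp (-(1 / 2) * t ^ 2)), integral_gaussian,
    Fintype.card_fin]
  congr 3
  ring

open scoped MatrixOrder in
lemma lintegral_exp_neg_half_dotProduct_inv_mulVec (hS : S.PosDef) :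
    ∫⁻ x, ENNReal.ofReal (Real.exp (-(1 / 2) * (x ⬝ᵥ S⁻¹ *ᵥ x))) =
      ENNReal.ofReal (Real.sqrt S.det * Real.sqrt (2 * Real.pi) ^ d) := by
  set B := CFC.sqrt S
  have hdetB : B.det = Real.sqrt S.det := by simpa using hS.posSemidef.det_sqrt
  have hB : B.det ≠ 0 := hdetB ▸ (Real.sqrt_pos.2 hS.det_pos).ne'
  have hBT : Bᵀ = B := (CFC.sqrt_nonneg S).posSemidef.isHermitian
  have hSinv : S⁻¹ = B⁻¹ * B⁻¹ := by
    rw [← Matrix.mul_inv_rev, CFC.sqrt_mul_sqrt_self S hS.posSemidef.nonneg]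
  have hquad : ∀ y, B *ᵥ y ⬝ᵥ S⁻¹ *ᵥ (B *ᵥ y) = y ⬝ᵥ y := fun y => by
    have hcancel : B⁻¹ *ᵥ (B *ᵥ y) = y := by
      rw [mulVec_mulVec, nonsing_inv_mul B (isUnit_iff_ne_zero.2 hB), one_mulVec]
    rw [hSinv, ← mulVec_mulVec, hcancel, dotProduct_mulVec, ← hBT, mulVec_transpose,
      vecMul_vecMul, hBT, mul_nonsing_inv B (isUnit_iff_ne_zero.2 hB), vecMul_one]
  have hc : 0 < Real.sqrt S.det := Real.sqrt_pos.2 hS.det_pos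
  have hchange := lintegral_map (μ := volume)
    (f := fun x : Fin d → ℝ => ENNReal.ofReal (Real.exp (-(1 / 2) * (x ⬝ᵥ S⁻¹ *ᵥ x))))
    (by fun_prop) (toLin' B).continuous_of_finiteDimensional.measurable
  rw [Real.map_matrix_volume_pi_eq_smul_volume_pi hB, lintegral_smul_measure, hdetB,
    abs_of_pos (inv_pos.2 hc), smul_eq_mul] at hchange
  simp_rw [toLin'_apply, hquad, lintegral_exp_neg_half_dotProduct_self] at hchange
  rw [ENNReal.ofReal_mul hc.le, ← hchange, ← mul_assoc, ← ENNReal.ofReal_mul hc.le,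
    mul_inv_cancel₀ hc.ne', ENNReal.ofReal_one, one_mul]

lemma lintegral_gaussDensity (hS : S.PosDef) : ∫⁻ x, ENNReal.ofReal (gaussDensity S x) = 1 := by
  have hnorm : Real.sqrt ((2 * Real.pi) ^ d * S.det) =
      Real.sqrt S.det * Real.sqrt (2 * Real.pi) ^ d := by
    rw [mul_comm, Real.sqrt_mul hS.det_pos.le]
    congr 1
    rw [Real.sqrt_eq_iff_mul_self_eq (by positivity) (by positivity), ← mul_pow,
      Real.mul_self_sqrt (by positivity)]
  simp_rw [gaussDensity, ENNReal.ofReal_mul (inv_nonneg.2 (Real.sqrt_nonneg _))]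
  rw [lintegral_const_mul _ (by fun_prop), lintegral_exp_neg_half_dotProduct_inv_mulVec hS,
    ← ENNReal.ofReal_mul (by positivity), hnorm,
    inv_mul_cancel₀ (mul_pos (Real.sqrt_pos.2 hS.det_pos) (by positivity)).ne', ENNReal.ofReal_one]

lemma isProbabilityMeasure_gaussMeasure (hS : S.PosDef) : IsProbabilityMeasure (gaussMeasure S) :=
  ⟨by rw [gaussMeasure, withDensity_apply _ MeasurableSet.univ, Measure.restrict_univ,
    lintegral_gaussDensity hS]⟩

lemma isOpenPosMeasure_gaussMeasure (hS : S.PosDef) : (gaussMeasure S).IsOpenPosMeasure :=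
  (withDensity_absolutelyContinuous'
    (continuous_gaussDensity S).measurable.ennreal_ofReal.aemeasurable
    (ae_of_all _ fun x => by simpa using gaussDensity_pos hS x)).isOpenPosMeasure

end Gaussian

/-- Fatou's lemma makes `i ↦ ν.withDensity (f i) E` lower semicontinuous for every measurable `E`;
applied to `Eᶜ`, total mass one turns this into upper semicontinuity (Scheffé). -/
theorem tendsto_withDensity_apply {α ι : Type*} [MeasurableSpace α] {ν : Measure α}
    {l : Filter ι} [l.IsCountablyGenerated] {f : ι → α → ℝ≥0∞} {g : α → ℝ≥0∞}
    [∀ i, IsProbabilityMeasure (ν.withDensity (f i))] [IsProbabilityMeasure (ν.withDensity g)]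
    (hf : ∀ i, Measurable (f i)) (hfg : ∀ᵐ x ∂ν, Tendsto (fun i => f i x) l (𝓝 (g x)))
    {B : Set α} (hB : MeasurableSet B) :
    Tendsto (fun i => ν.withDensity (f i) B) l (𝓝 (ν.withDensity g B)) := by
  rcases l.eq_or_neBot with rfl | _
  · exact tendsto_bot
  have fatou : ∀ E, MeasurableSet E →
      ν.withDensity g E ≤ liminf (fun i => ν.withDensity (f i) E) l := fun E hE => by
    simp only [withDensity_apply _ hE]
    calc ∫⁻ x in E, g x ∂ν = ∫⁻ x in E, liminf (fun i => f i x) l ∂ν :=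
          lintegral_congr_ae (ae_restrict_of_ae (hfg.mono fun x hx => hx.liminf_eq.symm))
      _ ≤ _ := lintegral_liminf_le hf
  exact tendsto_of_le_liminf_of_limsup_le (fatou B hB)
    (limsup_measure_le_of_le_liminf_measure_compl hB (fatou _ hB.compl))

lemma continuousOn_gaussMeasure_apply {d : ℕ} {B : Set (Fin d → ℝ)} (hB : MeasurableSet B) :
    ContinuousOn (fun S => gaussMeasure S B) {S : Matrix (Fin d) (Fin d) ℝ | S.PosDef} := by
  have : FirstCountableTopology (Matrix (Fin d) (Fin d) ℝ) :=
    inferInstanceAs (FirstCountableTopology (Fin d → Fin d → ℝ))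
  have (S : {S : Matrix (Fin d) (Fin d) ℝ | S.PosDef}) :
      IsProbabilityMeasure (volume.withDensity fun x => ENNReal.ofReal (gaussDensity S.1 x)) :=
    isProbabilityMeasure_gaussMeasure S.2
  rw [continuousOn_iff_continuous_domRestrict, continuous_iff_continuousAt]
  rintro ⟨S, hS⟩
  have : IsProbabilityMeasure (volume.withDensity fun x => ENNReal.ofReal (gaussDensity S x)) :=
    isProbabilityMeasure_gaussMeasure hS
  exact tendsto_withDensity_apply (ν := volume)
    (f := fun (S : {S : Matrix (Fin d) (Fin d) ℝ | S.PosDef}) x =>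
      ENNReal.ofReal (gaussDensity S.1 x))
    (g := fun x => ENNReal.ofReal (gaussDensity S x))
    (fun S => (continuous_gaussDensity S.1).measurable.ennreal_ofReal)
    (ae_of_all _ fun x => (ENNReal.continuous_ofReal.continuousAt.comp
      (continuousAt_gaussDensity_apply hS x)).tendsto.comp continuousAt_subtype_val.tendsto) hB

theorem gaussQuantile_continuousOn_general (d : ℕ) (φ : (Fin d → ℝ) → ℝ) (hφ : IsNorm φ)
    (α : ℝ) (hα0 : 0 < α) :
    ContinuousOn (gaussQuantile φ α) {S : Matrix (Fin d) (Fin d) ℝ | S.PosDef} := by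
  intro S hS
  have := isProbabilityMeasure_gaussMeasure hS
  have := isOpenPosMeasure_gaussMeasure hS
  have hlevel : ENNReal.ofReal (1 - α) < gaussMeasure S univ := by
    rw [measure_univ, ← ENNReal.ofReal_one]
    exact (ENNReal.ofReal_lt_ofReal_iff one_pos).2 (by linarith)
  exact tendsto_threshold
    (fun c => continuousOn_gaussMeasure_apply (hφ.measurableSet_setOf_lt c) S hS)
    (fun _ _ _ hbc => measure_mono fun _ hx => lt_of_lt_of_le hx hbc)
    (fun _ hc => hφ.lt_measure_setOf_lt _ hlevel hc)

/-- For any norm `φ` on `ℝ^d` and `α ∈ (0,1)`, the map `Σ ↦ c_α(Σ)` is continuous on the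
set of positive definite `d×d` real matrices. -/
theorem gaussQuantile_continuousOn (d : ℕ) (φ : (Fin d → ℝ) → ℝ) (hφ : IsNorm φ)
    (α : ℝ) (hα0 : 0 < α) (hα1 : α < 1) :
    ContinuousOn (gaussQuantile φ α) {S : Matrix (Fin d) (Fin d) ℝ | S.PosDef} :=
  gaussQuantile_continuousOn_general d φ hφ α hα0
end

section
/- Let B be a nonempty, closed, bounded and centrally symmetric subset of ℝ^d, let Σ be a positive definite d×d real matrix with centered Gaussian density f_Σ, and let h ∈ ℝ^d with h ≠ 0. Then there exists u ∈ ℝ such that {x + h : x ∈ B and f_Σ(x) > u} ≠ {x + h : x ∈ B} ∩ {y ∈ ℝ^d : f_Σ(y) > u}. -/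
open MeasureTheory Matrix Filter
open scoped ENNReal

/-!
Translating a superlevel set and intersecting a translate with a superlevel set agree at every
level only if the density takes the same value at `x` and `x + h` for every `x ∈ B`: otherwise
the smaller of the two values is a level at which `x + h` lies in exactly one of the two sets.
For a Gaussian density this would make the quadratic form `Q = xᵀ Σ⁻¹ x` satisfy
`Q(x + h) = Q(x)` on `B`, and adding this identity at `x` and at `-x ∈ B` gives `2 Q(h) = 0`,
contradicting `h ≠ 0`.
-/

theorem exists_level_image_ne_image_inter {α β : Type*} [LinearOrder β] {f : α → β}
    {T : α → α} (hT : T.Injective) {B : Set α} {x : α} (hx : x ∈ B) (hfx : f x ≠ f (T x)) :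
    ∃ u, T '' {x ∈ B | u < f x} ≠ T '' B ∩ {y | u < f y} := by
  rcases hfx.lt_or_gt with hlt | hgt
  · refine ⟨f x, fun heq => ?_⟩
    have hmem : T x ∈ T '' B ∩ {y | f x < f y} := ⟨Set.mem_image_of_mem T hx, hlt⟩
    rw [← heq, hT.mem_set_image] at hmem
    exact lt_irrefl _ hmem.2
  · refine ⟨f (T x), fun heq => ?_⟩
    have hmem : T x ∈ T '' {z ∈ B | f (T x) < f z} := Set.mem_image_of_mem T ⟨hx, hgt⟩
    rw [heq] at hmem
    exact lt_irrefl _ hmem.2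

theorem Matrix.IsSymm.dotProduct_mulVec_add_add {n R : Type*} [Fintype n] [CommRing R]
    {A : Matrix n n R} (hA : A.IsSymm) (x h : n → R) :
    (x + h) ⬝ᵥ (A *ᵥ (x + h)) = x ⬝ᵥ (A *ᵥ x) + 2 * (x ⬝ᵥ (A *ᵥ h)) + h ⬝ᵥ (A *ᵥ h) := by
  have hsymm : h ⬝ᵥ (A *ᵥ x) = x ⬝ᵥ (A *ᵥ h) := by
    rw [dotProduct_mulVec, ← mulVec_transpose, hA.eq, dotProduct_comm]
  simp only [mulVec_add, add_dotProduct, dotProduct_add, hsymm]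
  ring

theorem Matrix.IsSymm.dotProduct_mulVec_add_ne_or_neg_add_ne {n R : Type*} [Fintype n]
    [CommRing R] [IsDomain R] [CharZero R] {A : Matrix n n R} (hA : A.IsSymm) {h : n → R}
    (hh : h ⬝ᵥ (A *ᵥ h) ≠ 0) (x : n → R) :
    (x + h) ⬝ᵥ (A *ᵥ (x + h)) ≠ x ⬝ᵥ (A *ᵥ x) ∨
      (-x + h) ⬝ᵥ (A *ᵥ (-x + h)) ≠ -x ⬝ᵥ (A *ᵥ -x) := by
  by_contra! hboth
  obtain ⟨hpos, hneg⟩ := hboth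
  rw [hA.dotProduct_mulVec_add_add] at hpos hneg
  simp only [neg_dotProduct] at hneg
  have : 2 * (h ⬝ᵥ (A *ᵥ h)) = 0 := by linear_combination hpos + hneg
  exact hh ((mul_eq_zero.1 this).resolve_left two_ne_zero)

theorem gaussDensity_eq_gaussDensity_iff {d : ℕ} {S : Matrix (Fin d) (Fin d) ℝ} (hS : S.PosDef)
    {x y : Fin d → ℝ} :
    gaussDensity S x = gaussDensity S y ↔ x ⬝ᵥ (S⁻¹ *ᵥ x) = y ⬝ᵥ (S⁻¹ *ᵥ y) := by
  have hnorm : (Real.sqrt ((2 * Real.pi) ^ d * S.det))⁻¹ ≠ 0 :=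
    inv_ne_zero (Real.sqrt_ne_zero'.2 (mul_pos (pow_pos Real.two_pi_pos d) hS.det_pos))
  rw [gaussDensity, gaussDensity, mul_right_inj' hnorm, Real.exp_eq_exp,
    mul_right_inj' (by norm_num)]

theorem exists_mem_gaussDensity_ne_gaussDensity_add {d : ℕ} {B : Set (Fin d → ℝ)}
    (hBne : B.Nonempty) (hBsym : ∀ x ∈ B, -x ∈ B) {S : Matrix (Fin d) (Fin d) ℝ} (hS : S.PosDef)
    {h : Fin d → ℝ} (hh : h ≠ 0) :
    ∃ x ∈ B, gaussDensity S x ≠ gaussDensity S (x + h) := by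
  obtain ⟨x, hx⟩ := hBne
  have hSinv : (S⁻¹).IsSymm := isHermitian_iff_isSymm.1 hS.inv.isHermitian
  have hQh : h ⬝ᵥ (S⁻¹ *ᵥ h) ≠ 0 := by
    simpa using (hS.inv.dotProduct_mulVec_pos hh).ne'
  simp only [ne_eq, gaussDensity_eq_gaussDensity_iff hS]
  rcases hSinv.dotProduct_mulVec_add_ne_or_neg_add_ne hQh x with hne | hne
  · exact ⟨x, hx, Ne.symm hne⟩
  · exact ⟨-x, hBsym x hx, Ne.symm hne⟩

theorem exists_level_translate_ne_general (d : ℕ) (B : Set (Fin d → ℝ))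
    (hBne : B.Nonempty)
    (hBsym : ∀ x ∈ B, -x ∈ B)
    (S : Matrix (Fin d) (Fin d) ℝ) (hS : S.PosDef)
    (h : Fin d → ℝ) (hh : h ≠ 0) :
    ∃ u : ℝ,
      (fun x => x + h) '' {x ∈ B | u < gaussDensity S x}
        ≠ ((fun x => x + h) '' B) ∩ {y : Fin d → ℝ | u < gaussDensity S y} := by
  obtain ⟨x, hx, hne⟩ := exists_mem_gaussDensity_ne_gaussDensity_add hBne hBsym hS hh
  exact exists_level_image_ne_image_inter (add_left_injective h) hx hne

/-- For a nonempty, closed, bounded, centrally symmetric `B ⊆ ℝ^d`, positive definite `Σ`,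
and `h ≠ 0`, there exists a level `u` such that
`{x + h : x ∈ B, f_Σ(x) > u} ≠ {x + h : x ∈ B} ∩ {y : f_Σ(y) > u}`. -/
theorem exists_level_translate_ne (d : ℕ) (B : Set (Fin d → ℝ))
    (hBne : B.Nonempty) (hBcl : IsClosed B) (hBbd : Bornology.IsBounded B)
    (hBsym : ∀ x ∈ B, -x ∈ B)
    (S : Matrix (Fin d) (Fin d) ℝ) (hS : S.PosDef)
    (h : Fin d → ℝ) (hh : h ≠ 0) :
    ∃ u : ℝ,
      (fun x => x + h) '' {x ∈ B | u < gaussDensity S x}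
        ≠ ((fun x => x + h) '' B) ∩ {y : Fin d → ℝ | u < gaussDensity S y} :=
  exists_level_translate_ne_general d B hBne hBsym S hS h hh
end

section
/- Let φ be any norm on ℝ^d, let Σ be a positive definite d×d real matrix with centered Gaussian measure μ_Σ, let c > 0, and let τ satisfy 0 < τ < μ_Σ{ω : φ(ω) ≤ c}. Define Γ_mf(x) := inf{s ∈ [0, ∞) : μ_Σ{ω : φ(ω + s·x) ≤ c} ≤ τ} (with inf of the empty set equal to ∞). Then Γ_mf is quasi-concave: for every a ∈ [0, ∞], the superlevel set {x ∈ ℝ^d : Γ_mf(x) ≥ a} is convex. -/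
open MeasureTheory Matrix Filter
open scoped ENNReal

/-- The multiplicative factor measure
`Γ_mf(x) = inf{s ∈ [0,∞) : μ_Σ{ω : φ(ω + s·x) ≤ c} ≤ τ}`, with the infimum taken in
`[0,∞]` (so `inf ∅ = ∞`). -/
noncomputable def gammaMF {d : ℕ} (φ : (Fin d → ℝ) → ℝ) (S : Matrix (Fin d) (Fin d) ℝ)
    (c τ : ℝ) (x : Fin d → ℝ) : ℝ≥0∞ :=
  sInf (ENNReal.ofReal ''
    {s : ℝ | 0 ≤ s ∧ gaussMeasure S {ω : Fin d → ℝ | φ (ω + s • x) ≤ c} ≤ ENNReal.ofReal τ})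

/-!
For fixed `s`, the map `w ↦ μ_Σ {ω : φ (ω + w) ≤ c}` is quasi-concave: the Gaussian density is
log-concave, so by the Prékopa–Leindler inequality `μ_Σ` satisfies
`min (μ_Σ A) (μ_Σ B) ≤ μ_Σ C` whenever `(1 - t) • A + t • B ⊆ C`, and the translates
`K - w` of the convex body `K = {φ ≤ c}` satisfy `(1 - t) • (K - w₁) + t • (K - w₂) ⊆ K - w`
with `w = (1 - t) • w₁ + t • w₂`. So if `s < a ≤ Γ_mf x, Γ_mf y`, the measures at `s • x` and
`s • y` exceed `τ`, hence so does the measure at `s • (p • x + q • y)`, which keeps `s` out of the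
set whose infimum is `Γ_mf (p • x + q • y)`.

Prékopa–Leindler is proved by induction on the dimension through Fubini; in dimension one it
follows from the one-dimensional Brunn–Minkowski inequality `|A| + |B| ≤ |A + B|` applied to
superlevel sets, after truncating the two functions and normalizing their suprema to `1`.
-/

open Set
open scoped NNReal Pointwise

theorem ENNReal.rpow_mul_rpow_le_add {t : ℝ} (ht0 : 0 < t) (ht1 : t < 1) (a b : ℝ≥0∞) :
    a ^ (1 - t) * b ^ t ≤ ENNReal.ofReal (1 - t) * a + ENNReal.ofReal t * b := by
  have h1t : 0 < 1 - t := by linarith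
  rcases eq_or_ne a ⊤ with rfl | ha
  · rw [ENNReal.mul_top (by simpa using h1t), top_add]
    exact le_top
  rcases eq_or_ne b ⊤ with rfl | hb
  · rw [ENNReal.mul_top (by simpa using ht0), add_top]
    exact le_top
  lift a to ℝ≥0 using ha
  lift b to ℝ≥0 using hb
  have key := NNReal.geom_mean_le_arith_mean2_weighted (1 - t).toNNReal t.toNNReal a b
    (by rw [← Real.toNNReal_add h1t.le ht0.le]; simp)
  rw [Real.coe_toNNReal _ h1t.le, Real.coe_toNNReal _ ht0.le] at key
  rw [← ENNReal.coe_rpow_of_nonneg _ h1t.le, ← ENNReal.coe_rpow_of_nonneg _ ht0.le]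
  simp only [ENNReal.ofReal]
  exact_mod_cast key

theorem ENNReal.iSup_rpow {ι : Type*} (f : ι → ℝ≥0∞) {y : ℝ} (hy : 0 < y) :
    (⨆ i, f i) ^ y = ⨆ i, f i ^ y :=
  (ENNReal.orderIsoRpow y hy).map_iSup f

theorem MeasureTheory.lintegral_eq_lintegral_meas_lt_of_ne_top {α : Type*} [MeasurableSpace α]
    (μ : Measure α) {F : α → ℝ≥0∞} (hF : Measurable F) (hF_top : ∀ x, F x ≠ ∞) :
    ∫⁻ x, F x ∂μ = ∫⁻ s in Ioi 0, μ {x | ENNReal.ofReal s < F x} := by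
  calc ∫⁻ x, F x ∂μ = ∫⁻ x, ENNReal.ofReal (F x).toReal ∂μ := by
        simp only [ENNReal.ofReal_toReal (hF_top _)]
    _ = ∫⁻ s in Ioi 0, μ {x | s < (F x).toReal} :=
        lintegral_eq_lintegral_meas_lt μ (ae_of_all _ fun _ => ENNReal.toReal_nonneg)
          hF.ennreal_toReal.aemeasurable
    _ = ∫⁻ s in Ioi 0, μ {x | ENNReal.ofReal s < F x} := by
        refine setLIntegral_congr_fun measurableSet_Ioi fun s hs => ?_
        simp only [ENNReal.ofReal_lt_iff_lt_toReal (le_of_lt hs) (hF_top _)]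

theorem MeasureTheory.measurable_measure_ofReal_lt {α : Type*} [MeasurableSpace α]
    (μ : Measure α) (F : α → ℝ≥0∞) : Measurable fun s : ℝ => μ {x | ENNReal.ofReal s < F x} :=
  Antitone.measurable fun _ _ h => measure_mono fun _ hx => (ENNReal.ofReal_le_ofReal h).trans_lt hx

theorem MeasureTheory.lintegral_eq_iSup_lintegral_min_natCast {α : Type*} [MeasurableSpace α]
    (μ : Measure α) {F : α → ℝ≥0∞} (hF : Measurable F) :
    ∫⁻ x, F x ∂μ = ⨆ n : ℕ, ∫⁻ x, min (F x) n ∂μ := by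
  rw [← lintegral_iSup (fun n => hF.min measurable_const)
    fun m n h x => min_le_min_left _ (by exact_mod_cast h)]
  simp only [← inf_iSup_eq, ENNReal.iSup_natCast, inf_top_eq]

theorem IsCompact.volume_add_volume_le_volume_add {K L : Set ℝ} (hK : IsCompact K)
    (hL : IsCompact L) (hK' : K.Nonempty) (hL' : L.Nonempty) :
    volume K + volume L ≤ volume (K + L) := by
  set u := sSup K
  set v := sInf L
  have hu : u ∈ K := hK.sSup_mem hK'
  have hv : v ∈ L := hL.sInf_mem hL'
  have hKv : v +ᵥ K ⊆ K + L := by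
    rintro - ⟨k, hk, rfl⟩
    exact ⟨k, hk, v, hv, add_comm _ _⟩
  have huL : u +ᵥ L ⊆ K + L := by
    rintro - ⟨l, hl, rfl⟩
    exact ⟨u, hu, l, hl, rfl⟩
  -- with `u = max K` and `v = min L`, the translates `v + K` and `u + L` meet only at `u + v`
  have hinter : (v +ᵥ K) ∩ (u +ᵥ L) ⊆ {u + v} := by
    rintro - ⟨⟨k, hk, rfl⟩, ⟨l, hl, hlk⟩⟩
    have hku : k ≤ u := le_csSup hK.bddAbove hk
    have hvl : v ≤ l := csInf_le hL.bddBelow hl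
    simp only [vadd_eq_add] at hlk ⊢
    rw [mem_singleton_iff]
    linarith
  calc volume K + volume L = volume (v +ᵥ K) + volume (u +ᵥ L) := by
        rw [measure_vadd, measure_vadd]
    _ = volume ((v +ᵥ K) ∪ (u +ᵥ L)) := by
        rw [← measure_union_add_inter _ (hL.vadd u).measurableSet,
          measure_mono_null hinter (measure_singleton _), add_zero]
    _ ≤ volume (K + L) := measure_mono (union_subset hKv huL)

theorem Real.volume_add_volume_le_volume_add {A B : Set ℝ} (hA : MeasurableSet A)
    (hB : MeasurableSet B) (hA' : A.Nonempty) (hB' : B.Nonempty) :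
    volume A + volume B ≤ volume (A + B) := by
  obtain ⟨a, ha⟩ := hA'
  obtain ⟨b, hb⟩ := hB'
  rw [hA.measure_eq_iSup_isCompact, hB.measure_eq_iSup_isCompact]
  simp only [iSup_and']
  refine ENNReal.biSup_add_biSup_le' ⟨∅, empty_subset _, isCompact_empty⟩
    ⟨∅, empty_subset _, isCompact_empty⟩ fun K ⟨hKA, hK⟩ L ⟨hLB, hL⟩ => ?_
  -- adjoining a point keeps the compact sets inside `A` and `B` and makes them nonempty
  calc volume K + volume L ≤ volume (insert a K) + volume (insert b L) := by
        gcongr <;> exact subset_insert _ _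
    _ ≤ volume (insert a K + insert b L) :=
        (hK.insert a).volume_add_volume_le_volume_add (hL.insert b) (insert_nonempty _ _)
          (insert_nonempty _ _)
    _ ≤ volume (A + B) :=
        measure_mono (add_subset_add (insert_subset ha hKA) (insert_subset hb hLB))

theorem Real.ofReal_mul_volume_add_ofReal_mul_volume_le {A B : Set ℝ} (hA : MeasurableSet A)
    (hB : MeasurableSet B) (hA' : A.Nonempty) (hB' : B.Nonempty) {p q : ℝ} (hp : 0 < p)
    (hq : 0 < q) :
    ENNReal.ofReal p * volume A + ENNReal.ofReal q * volume B ≤ volume (p • A + q • B) := by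
  have := Real.volume_add_volume_le_volume_add (hA.const_smul_of_ne_zero hp.ne')
    (hB.const_smul_of_ne_zero hq.ne') (hA'.smul_set) (hB'.smul_set)
  simpa [Measure.addHaar_smul, abs_of_pos hp, abs_of_pos hq] using this

def IsPrekopaLeindler {E : Type*} [AddCommGroup E] [Module ℝ E] [MeasurableSpace E]
    (μ : Measure E) : Prop :=
  ∀ ⦃t : ℝ⦄, 0 < t → t < 1 → ∀ ⦃F G H : E → ℝ≥0∞⦄, Measurable F → Measurable G → Measurable H →
    (∀ x y, F x ^ (1 - t) * G y ^ t ≤ H ((1 - t) • x + t • y)) →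
    (∫⁻ x, F x ∂μ) ^ (1 - t) * (∫⁻ x, G x ∂μ) ^ t ≤ ∫⁻ x, H x ∂μ

section PrekopaLeindler

variable {E E' : Type*} [AddCommGroup E] [Module ℝ E] [MeasurableSpace E]
  [AddCommGroup E'] [Module ℝ E'] [MeasurableSpace E']

theorem isPrekopaLeindler_dirac (a : E) : IsPrekopaLeindler (Measure.dirac a) := by
  intro t _ _ F G H hF hG hH hFGH
  rw [lintegral_dirac' a hF, lintegral_dirac' a hG, lintegral_dirac' a hH]
  simpa [← add_smul] using hFGH a a

theorem IsPrekopaLeindler.prod {μ : Measure E} {ν : Measure E'} [SFinite ν]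
    (hμ : IsPrekopaLeindler μ) (hν : IsPrekopaLeindler ν) : IsPrekopaLeindler (μ.prod ν) := by
  intro t ht0 ht1 F G H hF hG hH hFGH
  rw [lintegral_prod _ hF.aemeasurable, lintegral_prod _ hG.aemeasurable,
    lintegral_prod _ hH.aemeasurable]
  exact hμ ht0 ht1 hF.lintegral_prod_right' hG.lintegral_prod_right' hH.lintegral_prod_right'
    fun a b => hν ht0 ht1 (hF.comp measurable_prodMk_left) (hG.comp measurable_prodMk_left)
      (hH.comp measurable_prodMk_left) fun x y => hFGH (a, x) (b, y)

theorem IsPrekopaLeindler.map_linearMap {μ : Measure E} {ν : Measure E'}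
    (hμ : IsPrekopaLeindler μ) (e : E →ₗ[ℝ] E') (he : MeasurePreserving e μ ν) :
    IsPrekopaLeindler ν := by
  intro t ht0 ht1 F G H hF hG hH hFGH
  rw [← he.lintegral_comp hF, ← he.lintegral_comp hG, ← he.lintegral_comp hH]
  exact hμ ht0 ht1 (hF.comp he.measurable) (hG.comp he.measurable) (hH.comp he.measurable)
    fun x y => by simpa using hFGH (e x) (e y)

theorem IsPrekopaLeindler.withDensity {μ : Measure E} (hμ : IsPrekopaLeindler μ)
    {ρ : E → ℝ≥0∞} (hρ : Measurable ρ)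
    (hρ_lc : ∀ t ∈ Ioo (0 : ℝ) 1, ∀ x y, ρ x ^ (1 - t) * ρ y ^ t ≤ ρ ((1 - t) • x + t • y)) :
    IsPrekopaLeindler (μ.withDensity ρ) := by
  intro t ht0 ht1 F G H hF hG hH hFGH
  have h1t : 0 < 1 - t := by linarith
  rw [lintegral_withDensity_eq_lintegral_mul _ hρ hF,
    lintegral_withDensity_eq_lintegral_mul _ hρ hG, lintegral_withDensity_eq_lintegral_mul _ hρ hH]
  refine hμ ht0 ht1 (hρ.mul hF) (hρ.mul hG) (hρ.mul hH) fun x y => ?_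
  simp only [Pi.mul_apply]
  rw [ENNReal.mul_rpow_of_nonneg _ _ h1t.le, ENNReal.mul_rpow_of_nonneg _ _ ht0.le,
    mul_mul_mul_comm]
  exact mul_le_mul' (hρ_lc t ⟨ht0, ht1⟩ x y) (hFGH x y)

theorem IsPrekopaLeindler.min_measure_le {μ : Measure E} (hμ : IsPrekopaLeindler μ)
    {A B C : Set E} (hA : MeasurableSet A) (hB : MeasurableSet B) (hC : MeasurableSet C)
    {t : ℝ} (ht0 : 0 < t) (ht1 : t < 1) (hABC : ∀ a ∈ A, ∀ b ∈ B, (1 - t) • a + t • b ∈ C) :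
    min (μ A) (μ B) ≤ μ C := by
  have h1t : 0 < 1 - t := by linarith
  have hPL := hμ ht0 ht1 (measurable_one.indicator hA) (measurable_one.indicator hB)
    (measurable_one.indicator hC) fun x y => by
      by_cases hx : x ∈ A
      · by_cases hy : y ∈ B
        · simp [hx, hy, hABC x hx y hy]
        · simp [hy, ENNReal.zero_rpow_of_pos ht0]
      · simp [hx, ENNReal.zero_rpow_of_pos h1t]
  rw [lintegral_indicator_one hA, lintegral_indicator_one hB, lintegral_indicator_one hC] at hPL
  calc min (μ A) (μ B) = min (μ A) (μ B) ^ (1 - t) * min (μ A) (μ B) ^ t := by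
        rw [← ENNReal.rpow_add_of_nonneg _ _ h1t.le ht0.le, sub_add_cancel, ENNReal.rpow_one]
    _ ≤ μ A ^ (1 - t) * μ B ^ t := by gcongr; exacts [min_le_left _ _, min_le_right _ _]
    _ ≤ μ C := hPL

end PrekopaLeindler

theorem ofReal_mul_volume_lt_add_le_of_iSup_eq_one {t : ℝ} (ht0 : 0 < t) (ht1 : t < 1)
    {F G H : ℝ → ℝ≥0∞} (hF : Measurable F) (hG : Measurable G)
    (hF1 : ⨆ x, F x = 1) (hG1 : ⨆ x, G x = 1)
    (hFGH : ∀ x y, F x ^ (1 - t) * G y ^ t ≤ H ((1 - t) • x + t • y)) (s : ℝ) :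
    ENNReal.ofReal (1 - t) * volume {x | ENNReal.ofReal s < F x} +
        ENNReal.ofReal t * volume {x | ENNReal.ofReal s < G x} ≤
      volume {x | ENNReal.ofReal s < min (H x) 1} := by
  have h1t : 0 < 1 - t := by linarith
  rcases lt_or_ge s 1 with hs1 | hs1
  · have hs1' : ENNReal.ofReal s < 1 := ENNReal.ofReal_lt_one.mpr hs1
    have hFs : {x | ENNReal.ofReal s < F x}.Nonempty :=
      lt_iSup_iff.mp (show ENNReal.ofReal s < ⨆ x, F x by rwa [hF1])
    have hGs : {x | ENNReal.ofReal s < G x}.Nonempty :=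
      lt_iSup_iff.mp (show ENNReal.ofReal s < ⨆ x, G x by rwa [hG1])
    refine (Real.ofReal_mul_volume_add_ofReal_mul_volume_le (hF measurableSet_Ioi)
      (hG measurableSet_Ioi) hFs hGs h1t ht0).trans (measure_mono ?_)
    rintro - ⟨-, ⟨a, ha, rfl⟩, -, ⟨b, hb, rfl⟩, rfl⟩
    refine lt_min ?_ hs1'
    calc ENNReal.ofReal s = ENNReal.ofReal s ^ (1 - t) * ENNReal.ofReal s ^ t := by
          rw [← ENNReal.rpow_add_of_nonneg _ _ h1t.le ht0.le, sub_add_cancel, ENNReal.rpow_one]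
      _ < F a ^ (1 - t) * G b ^ t :=
          ENNReal.mul_lt_mul (ENNReal.rpow_lt_rpow ha h1t) (ENNReal.rpow_lt_rpow hb ht0)
      _ ≤ H ((1 - t) • a + t • b) := hFGH a b
  · have hs1' : 1 ≤ ENNReal.ofReal s := ENNReal.one_le_ofReal.mpr hs1
    have hFs : {x | ENNReal.ofReal s < F x} = ∅ := eq_empty_of_forall_notMem fun x hx =>
      (hx.trans_le ((hF1 ▸ le_iSup F x).trans hs1')).false
    have hGs : {x | ENNReal.ofReal s < G x} = ∅ := eq_empty_of_forall_notMem fun x hx =>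
      (hx.trans_le ((hG1 ▸ le_iSup G x).trans hs1')).false
    simp [hFs, hGs]

theorem ofReal_mul_lintegral_add_le_of_iSup_eq_one {t : ℝ} (ht0 : 0 < t) (ht1 : t < 1)
    {F G H : ℝ → ℝ≥0∞} (hF : Measurable F) (hG : Measurable G) (hH : Measurable H)
    (hF1 : ⨆ x, F x = 1) (hG1 : ⨆ x, G x = 1)
    (hFGH : ∀ x y, F x ^ (1 - t) * G y ^ t ≤ H ((1 - t) • x + t • y)) :
    ENNReal.ofReal (1 - t) * (∫⁻ x, F x) + ENNReal.ofReal t * ∫⁻ x, G x ≤ ∫⁻ x, H x := by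
  have hF_top : ∀ x, F x ≠ ∞ := fun x => ne_top_of_le_ne_top ENNReal.one_ne_top (hF1 ▸ le_iSup F x)
  have hG_top : ∀ x, G x ≠ ∞ := fun x => ne_top_of_le_ne_top ENNReal.one_ne_top (hG1 ▸ le_iSup G x)
  -- `H` is capped at `1` so that the layer-cake formula for finite-valued functions applies to it
  have hH1 : Measurable fun x => min (H x) 1 := hH.min measurable_const
  calc ENNReal.ofReal (1 - t) * (∫⁻ x, F x) + ENNReal.ofReal t * ∫⁻ x, G x
      = ∫⁻ s in Ioi 0, (ENNReal.ofReal (1 - t) * volume {x | ENNReal.ofReal s < F x} +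
          ENNReal.ofReal t * volume {x | ENNReal.ofReal s < G x}) := by
        rw [lintegral_eq_lintegral_meas_lt_of_ne_top _ hF hF_top,
          lintegral_eq_lintegral_meas_lt_of_ne_top _ hG hG_top,
          lintegral_add_left ((measurable_measure_ofReal_lt _ F).const_mul _),
          lintegral_const_mul _ (measurable_measure_ofReal_lt _ F),
          lintegral_const_mul _ (measurable_measure_ofReal_lt _ G)]
    _ ≤ ∫⁻ s in Ioi 0, volume {x | ENNReal.ofReal s < min (H x) 1} :=
        setLIntegral_mono (measurable_measure_ofReal_lt _ _) fun s _ =>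
          ofReal_mul_volume_lt_add_le_of_iSup_eq_one ht0 ht1 hF hG hF1 hG1 hFGH s
    _ = ∫⁻ x, min (H x) 1 :=
        (lintegral_eq_lintegral_meas_lt_of_ne_top _ hH1 fun x =>
          ne_top_of_le_ne_top ENNReal.one_ne_top (min_le_right _ _)).symm
    _ ≤ ∫⁻ x, H x := lintegral_mono fun x => min_le_left _ _

theorem rpow_lintegral_mul_le_of_iSup_ne_top {t : ℝ} (ht0 : 0 < t) (ht1 : t < 1)
    {F G H : ℝ → ℝ≥0∞} (hF : Measurable F) (hG : Measurable G) (hH : Measurable H)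
    (hF_top : ⨆ x, F x ≠ ∞) (hG_top : ⨆ x, G x ≠ ∞)
    (hFGH : ∀ x y, F x ^ (1 - t) * G y ^ t ≤ H ((1 - t) • x + t • y)) :
    (∫⁻ x, F x) ^ (1 - t) * (∫⁻ x, G x) ^ t ≤ ∫⁻ x, H x := by
  have h1t : 0 < 1 - t := by linarith
  set M := ⨆ x, F x
  set N := ⨆ x, G x
  rcases eq_or_ne M 0 with hM | hM
  · have hF0 : ∀ x, F x = 0 := fun x => le_antisymm (hM ▸ le_iSup F x) zero_le
    simp [hF0, ENNReal.zero_rpow_of_pos h1t]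
  rcases eq_or_ne N 0 with hN | hN
  · have hG0 : ∀ x, G x = 0 := fun x => le_antisymm (hN ▸ le_iSup G x) zero_le
    simp [hG0, ENNReal.zero_rpow_of_pos ht0]
  -- normalize `F` and `G` to have supremum `1`, and `H` accordingly
  set K := M ^ (1 - t) * N ^ t
  have hK0 : K ≠ 0 := mul_ne_zero (ENNReal.rpow_pos (pos_iff_ne_zero.2 hM) hF_top).ne'
    (ENNReal.rpow_pos (pos_iff_ne_zero.2 hN) hG_top).ne'
  have hK_top : K ≠ ∞ := ENNReal.mul_ne_top (ENNReal.rpow_ne_top_of_nonneg h1t.le hF_top)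
    (ENNReal.rpow_ne_top_of_nonneg ht0.le hG_top)
  have hscale : ∀ a b : ℝ≥0∞,
      (M⁻¹ * a) ^ (1 - t) * (N⁻¹ * b) ^ t = K⁻¹ * (a ^ (1 - t) * b ^ t) := by
    intro a b
    rw [ENNReal.mul_rpow_of_nonneg _ _ h1t.le, ENNReal.mul_rpow_of_nonneg _ _ ht0.le,
      ENNReal.inv_rpow, ENNReal.inv_rpow,
      ENNReal.mul_inv (Or.inr (ENNReal.rpow_ne_top_of_nonneg ht0.le hG_top))
        (Or.inl (ENNReal.rpow_ne_top_of_nonneg h1t.le hF_top))]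
    ring
  have key := ofReal_mul_lintegral_add_le_of_iSup_eq_one ht0 ht1 (hF.const_mul M⁻¹)
    (hG.const_mul N⁻¹) (hH.const_mul K⁻¹)
    (by rw [← ENNReal.mul_iSup, ENNReal.inv_mul_cancel hM hF_top])
    (by rw [← ENNReal.mul_iSup, ENNReal.inv_mul_cancel hN hG_top])
    fun x y => by rw [hscale]; gcongr; exact hFGH x y
  rw [lintegral_const_mul _ hF, lintegral_const_mul _ hG, lintegral_const_mul _ hH] at key
  calc (∫⁻ x, F x) ^ (1 - t) * (∫⁻ x, G x) ^ t
      = K * ((M⁻¹ * ∫⁻ x, F x) ^ (1 - t) * (N⁻¹ * ∫⁻ x, G x) ^ t) := by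
        rw [hscale, ← mul_assoc, ENNReal.mul_inv_cancel hK0 hK_top, one_mul]
    _ ≤ K * (ENNReal.ofReal (1 - t) * (M⁻¹ * ∫⁻ x, F x) +
          ENNReal.ofReal t * (N⁻¹ * ∫⁻ x, G x)) := by
        gcongr; exact ENNReal.rpow_mul_rpow_le_add ht0 ht1 _ _
    _ ≤ K * (K⁻¹ * ∫⁻ x, H x) := by gcongr
    _ = ∫⁻ x, H x := by rw [← mul_assoc, ENNReal.mul_inv_cancel hK0 hK_top, one_mul]

theorem Real.isPrekopaLeindler_volume : IsPrekopaLeindler (volume : Measure ℝ) := by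
  intro t ht0 ht1 F G H hF hG hH hFGH
  have h1t : 0 < 1 - t := by linarith
  have hbdd : ∀ (F : ℝ → ℝ≥0∞) (n : ℕ), ⨆ x, min (F x) n ≠ ∞ := fun F n =>
    ne_top_of_le_ne_top (ENNReal.natCast_ne_top n) (iSup_le fun x => min_le_right _ _)
  rw [lintegral_eq_iSup_lintegral_min_natCast _ hF, lintegral_eq_iSup_lintegral_min_natCast _ hG,
    ENNReal.iSup_rpow _ h1t, ENNReal.iSup_rpow _ ht0, ENNReal.iSup_mul]
  refine iSup_le fun m => ?_
  rw [ENNReal.mul_iSup]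
  refine iSup_le fun n => ?_
  refine rpow_lintegral_mul_le_of_iSup_ne_top ht0 ht1 (hF.min measurable_const)
    (hG.min measurable_const) hH (hbdd F m) (hbdd G n) fun x y => le_trans ?_ (hFGH x y)
  gcongr <;> exact min_le_left _ _

theorem isPrekopaLeindler_volume_pi : ∀ d : ℕ, IsPrekopaLeindler (volume : Measure (Fin d → ℝ))
  | 0 => by
    rw [volume_pi, Measure.pi_of_empty]
    exact isPrekopaLeindler_dirac _
  | d + 1 => by
    refine (Real.isPrekopaLeindler_volume.prod (isPrekopaLeindler_volume_pi d)).map_linearMap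
      (Fin.consLinearEquiv ℝ fun _ => ℝ).toLinearMap ?_
    convert (volume_preserving_piFinSuccAbove (fun _ : Fin (d + 1) => ℝ) 0).symm using 1
    · rfl
    · funext p
      exact (Fin.insertNth_zero' p.1 p.2).symm
    · exact (Measure.volume_eq_prod _ _).symm

theorem Matrix.PosSemidef.convexOn_dotProduct_mulVec {n : Type*} [Fintype n]
    {B : Matrix n n ℝ} (hB : B.PosSemidef) : ConvexOn ℝ univ fun x : n → ℝ => x ⬝ᵥ (B *ᵥ x) := by
  refine ⟨convex_univ, fun x _ y _ a b ha hb hab => ?_⟩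
  have hxy := hB.dotProduct_mulVec_nonneg (x - y)
  simp only [star_trivial, mulVec_sub, mulVec_add, mulVec_smul, dotProduct_sub, sub_dotProduct,
    dotProduct_add, add_dotProduct, dotProduct_smul, smul_dotProduct, smul_eq_mul] at hxy ⊢
  obtain rfl : b = 1 - a := by linarith
  nlinarith [mul_nonneg (mul_nonneg ha hb) hxy]

theorem ConvexOn.mul_exp_neg_rpow_mul_rpow_le {E : Type*} [AddCommGroup E] [Module ℝ E]
    {g : E → ℝ} (hg : ConvexOn ℝ univ g) {Z : ℝ} (hZ : 0 ≤ Z) {t : ℝ} (ht0 : 0 ≤ t) (ht1 : t ≤ 1)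
    (x y : E) :
    (Z * Real.exp (-g x)) ^ (1 - t) * (Z * Real.exp (-g y)) ^ t ≤
      Z * Real.exp (-g ((1 - t) • x + t • y)) := by
  have hconv := hg.2 (mem_univ x) (mem_univ y) (sub_nonneg.2 ht1) ht0 (sub_add_cancel 1 t)
  rw [Real.mul_rpow hZ (Real.exp_pos _).le, Real.mul_rpow hZ (Real.exp_pos _).le,
    ← Real.exp_mul, ← Real.exp_mul, mul_mul_mul_comm, ← Real.rpow_add' hZ (by norm_num),
    sub_add_cancel, Real.rpow_one, ← Real.exp_add]
  gcongr
  simp only [smul_eq_mul] at hconv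
  linarith

theorem gaussDensity_nonneg {d : ℕ} (S : Matrix (Fin d) (Fin d) ℝ) (x : Fin d → ℝ) :
    0 ≤ gaussDensity S x := by
  unfold gaussDensity
  positivity

theorem gaussDensity_logConcave {d : ℕ} {S : Matrix (Fin d) (Fin d) ℝ} (hS : S.PosSemidef)
    {t : ℝ} (ht0 : 0 ≤ t) (ht1 : t ≤ 1) (x y : Fin d → ℝ) :
    ENNReal.ofReal (gaussDensity S x) ^ (1 - t) * ENNReal.ofReal (gaussDensity S y) ^ t ≤
      ENNReal.ofReal (gaussDensity S ((1 - t) • x + t • y)) := by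
  rw [ENNReal.ofReal_rpow_of_nonneg (gaussDensity_nonneg S x) (sub_nonneg.2 ht1),
    ENNReal.ofReal_rpow_of_nonneg (gaussDensity_nonneg S y) ht0,
    ← ENNReal.ofReal_mul (Real.rpow_nonneg (gaussDensity_nonneg S x) _)]
  refine ENNReal.ofReal_le_ofReal ?_
  have hg := hS.inv.convexOn_dotProduct_mulVec.smul (show (0 : ℝ) ≤ 1 / 2 by norm_num)
  simpa only [gaussDensity, smul_eq_mul, neg_mul] using
    hg.mul_exp_neg_rpow_mul_rpow_le (by positivity) ht0 ht1 x y

theorem isPrekopaLeindler_gaussMeasure {d : ℕ} {S : Matrix (Fin d) (Fin d) ℝ}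
    (hS : S.PosSemidef) : IsPrekopaLeindler (gaussMeasure S) := by
  refine (isPrekopaLeindler_volume_pi d).withDensity ?_
    fun t ht x y => gaussDensity_logConcave hS ht.1.le ht.2.le x y
  refine ENNReal.measurable_ofReal.comp (Continuous.measurable ?_)
  unfold gaussDensity
  fun_prop

theorem min_gaussMeasure_le {d : ℕ} {S : Matrix (Fin d) (Fin d) ℝ} (hS : S.PosSemidef)
    {K : Set (Fin d → ℝ)} (hK : Convex ℝ K) (hK' : MeasurableSet K) {p q : ℝ} (hp : 0 ≤ p)
    (hq : 0 ≤ q) (hpq : p + q = 1) (w₁ w₂ : Fin d → ℝ) :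
    min (gaussMeasure S {ω | ω + w₁ ∈ K}) (gaussMeasure S {ω | ω + w₂ ∈ K}) ≤
      gaussMeasure S {ω | ω + (p • w₁ + q • w₂) ∈ K} := by
  rcases hp.eq_or_lt with rfl | hp
  · obtain rfl : q = 1 := by linarith
    simp
  rcases hq.eq_or_lt with rfl | hq
  · obtain rfl : p = 1 := by linarith
    simp
  obtain rfl : p = 1 - q := by linarith
  have hmeas : ∀ w, MeasurableSet {ω | ω + w ∈ K} := fun w => hK'.preimage (measurable_add_const w)
  refine (isPrekopaLeindler_gaussMeasure hS).min_measure_le (hmeas _) (hmeas _) (hmeas _) hq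
    (by linarith) fun a ha b hb => ?_
  show (1 - q) • a + q • b + ((1 - q) • w₁ + q • w₂) ∈ K
  convert hK ha hb hp.le hq.le hpq using 1
  module

theorem IsNorm.convexOn_s15 {d : ℕ} {φ : (Fin d → ℝ) → ℝ} (hφ : IsNorm φ) : ConvexOn ℝ univ φ := by
  refine ⟨convex_univ, fun x _ y _ a b ha hb _ => ?_⟩
  calc φ (a • x + b • y) ≤ φ (a • x) + φ (b • y) := hφ.triangle _ _
    _ = a • φ x + b • φ y := by
      rw [hφ.smul, hφ.smul, abs_of_nonneg ha, abs_of_nonneg hb, smul_eq_mul, smul_eq_mul]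

theorem ofReal_lt_gaussMeasure_of_ofReal_lt_gammaMF {d : ℕ} {φ : (Fin d → ℝ) → ℝ}
    {S : Matrix (Fin d) (Fin d) ℝ} {c τ s : ℝ} {x : Fin d → ℝ} (hs : 0 ≤ s)
    (hsx : ENNReal.ofReal s < gammaMF φ S c τ x) :
    ENNReal.ofReal τ < gaussMeasure S {ω | φ (ω + s • x) ≤ c} :=
  lt_of_not_ge fun h => hsx.not_ge (sInf_le ⟨s, ⟨hs, h⟩, rfl⟩)

theorem gammaMF_quasiConcave_general (d : ℕ) (φ : (Fin d → ℝ) → ℝ) (hφ : IsNorm φ)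
    (S : Matrix (Fin d) (Fin d) ℝ) (hS : S.PosDef) (c : ℝ)
    (τ : ℝ)
    (a : ℝ≥0∞) :
    Convex ℝ {x : Fin d → ℝ | a ≤ gammaMF φ S c τ x} := by
  have hK : Convex ℝ {v : Fin d → ℝ | φ v ≤ c} := by simpa using hφ.convexOn_s15.convex_le c
  have hK' : MeasurableSet {v : Fin d → ℝ | φ v ≤ c} :=
    measurableSet_le hφ.convexOn_s15.locallyLipschitz.continuous.measurable measurable_const
  intro x hx y hy p q hp hq hpq
  show a ≤ gammaMF φ S c τ (p • x + q • y)
  refine le_sInf ?_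
  rintro - ⟨s, ⟨hs, hsτ⟩, rfl⟩
  by_contra! hsa
  have hmin := min_gaussMeasure_le hS.posSemidef hK hK' hp hq hpq (s • x) (s • y)
  rw [smul_comm p s, smul_comm q s, ← smul_add] at hmin
  exact hsτ.not_gt ((lt_min (ofReal_lt_gaussMeasure_of_ofReal_lt_gammaMF hs (hsa.trans_le hx))
    (ofReal_lt_gaussMeasure_of_ofReal_lt_gammaMF hs (hsa.trans_le hy))).trans_le hmin)

/-- The multiplicative factor measure is quasi-concave: every superlevel set
`{x : Γ_mf(x) ≥ a}` (for `a ∈ [0,∞]`) is convex. -/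
theorem gammaMF_quasiConcave (d : ℕ) (φ : (Fin d → ℝ) → ℝ) (hφ : IsNorm φ)
    (S : Matrix (Fin d) (Fin d) ℝ) (hS : S.PosDef) (c : ℝ) (hc : 0 < c)
    (τ : ℝ) (hτ0 : 0 < τ)
    (hτ1 : ENNReal.ofReal τ < gaussMeasure S {ω : Fin d → ℝ | φ ω ≤ c})
    (a : ℝ≥0∞) :
    Convex ℝ {x : Fin d → ℝ | a ≤ gammaMF φ S c τ x} :=
  gammaMF_quasiConcave_general d φ hφ S hS c τ a
end
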